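/- If g is a finite-dimensional semisimple Lie algebra over an algebraically closed field of characteristic 0 and e ∈ g satisfies e ∈ [g_e, g_e], where g_e is the centralizer of e in g, then e is nilpotent (i.e., ad e is a nilpotent endomorphism). -/

import Mathlib

/-!
For `x ∈ g_e` the operators `ad e` and `ad x` commute, so by cyclicity of the trace
`tr ((ad e)^k ∘ ad ⁅x, y⁆) = 0` for `x, y ∈ g_e`; as `e ∈ [g_e, g_e]`, every power `(ad e)^(k+1)`
has trace zero. Splitting into generalized eigenspaces, these traces are the power sums
`∑ μ, d_μ μ^(k+1)` with `d_μ` the dimensions, and the invertibility of the Vandermonde matrix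
forces `d_μ μ = 0`; in characteristic zero this leaves `0` as the only eigenvalue.
-/

section Defs

variable (K : Type*) (L : Type*) [Field K] [LieRing L] [LieAlgebra K L]

/-- The centralizer `g_e = {x ∈ g : ⁅e, x⁆ = 0}` of an element `e`, as a Lie subalgebra. -/
def lieCentralizer (e : L) : LieSubalgebra K L where
  carrier := {x | ⁅e, x⁆ = 0}
  add_mem' := fun {a b} ha hb => by
    simp only [Set.mem_setOf_eq, lie_add] at *
    rw [ha, hb, add_zero]
  zero_mem' := by simp
  smul_mem' := fun c a ha => by
    simp only [Set.mem_setOf_eq, lie_smul] at *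
    rw [ha, smul_zero]
  lie_mem' := fun {a b} ha hb => by
    simp only [Set.mem_setOf_eq] at *
    rw [leibniz_lie, ha, hb, zero_lie, lie_zero, add_zero]

/-- The span of all brackets `⁅x, y⁆` with `x ∈ A`, `y ∈ B`; for `A = B` the carrier
of a Lie subalgebra this is the derived subalgebra `[A, A]`. -/
def bracketSpan (A B : Submodule K L) : Submodule K L :=
  Submodule.span K {z | ∃ x ∈ A, ∃ y ∈ B, z = ⁅x, y⁆}

/-- The `ad h`-eigenspace `g(k) = {x ∈ g : ⁅h, x⁆ = k • x}` for an integer `k`. -/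
def adEigenspace (h : L) (k : ℤ) : Submodule K L :=
  Module.End.eigenspace (LieAlgebra.ad K L h) (k : K)

end Defs

open Module

namespace Finset

theorem eq_zero_of_forall_sum_mul_pow_eq_zero {R : Type*} [CommRing R] [IsDomain R]
    {s : Finset R} {w : R → R} (h : ∀ i : ℕ, ∑ μ ∈ s, w μ * μ ^ i = 0) {μ : R} (hμ : μ ∈ s) :
    w μ = 0 := by
  let f : Fin s.card → R := fun j => s.equivFin.symm j
  have hf : Function.Injective f := Subtype.val_injective.comp s.equivFin.symm.injective
  have hv := Matrix.eq_zero_of_forall_pow_sum_mul_pow_eq_zero (v := w ∘ f) hf fun i => by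
    rw [← h i, ← s.sum_coe_sort]
    exact s.equivFin.symm.sum_comp (fun μ : s => w μ * (μ : R) ^ (i : ℕ))
  simpa [f] using congrFun hv (s.equivFin ⟨μ, hμ⟩)

end Finset

namespace Module.End

variable {K V : Type*} [Field K] [AddCommGroup V] [Module K V] [FiniteDimensional K V]

theorem trace_pow_restrict_maxGenEigenspace (φ : End K V) (μ : K) (n : ℕ)
    (h : Set.MapsTo (φ ^ n) (φ.maxGenEigenspace μ) (φ.maxGenEigenspace μ)) :
    LinearMap.trace K _ ((φ ^ n).restrict h) = finrank K (φ.maxGenEigenspace μ) * μ ^ n := by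
  have hφ := φ.mapsTo_maxGenEigenspace_of_comm rfl μ
  rw [← pow_restrict n hφ]
  clear h
  induction n with
  | zero => simp [mul_comm]
  | succ n ih =>
    rw [pow_succ, mul_eq_comp, LinearMap.trace_comp_eq_mul_of_commute_of_isNilpotent μ
      (Commute.self_pow _ n).symm (φ.isNilpotent_restrict_maxGenEigenspace_sub_algebraMap μ),
      ih]
    ring

theorem trace_pow_eq_sum_finrank_maxGenEigenspace_mul_pow [IsAlgClosed K] (φ : End K V)
    {s : Finset K} (hs : ∀ μ, φ.maxGenEigenspace μ ≠ ⊥ → μ ∈ s) (n : ℕ) :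
    LinearMap.trace K V (φ ^ n) = ∑ μ ∈ s, finrank K (φ.maxGenEigenspace μ) * μ ^ n := by
  classical
  have hfin := WellFoundedGT.finite_ne_bot_of_iSupIndep φ.independent_maxGenEigenspace
  have hint := DirectSum.isInternal_submodule_of_iSupIndep_of_iSup_eq_top
    φ.independent_maxGenEigenspace φ.iSup_maxGenEigenspace_eq_top
  rw [LinearMap.trace_eq_sum_trace_restrict' hint hfin
    fun μ => φ.mapsTo_maxGenEigenspace_of_comm ((Commute.refl φ).pow_right n) μ]
  simp_rw [trace_pow_restrict_maxGenEigenspace]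
  refine Finset.sum_subset (fun μ hμ => hs μ (hfin.mem_toFinset.mp hμ)) fun μ _ hμ => ?_
  have hbot : φ.maxGenEigenspace μ = ⊥ := by simpa using hμ
  rw [Submodule.finrank_eq_zero.mpr hbot, Nat.cast_zero, zero_mul]

variable [CharZero K] [IsAlgClosed K]

theorem maxGenEigenspace_eq_bot_of_forall_trace_pow_succ_eq_zero (φ : End K V)
    (H : ∀ k : ℕ, LinearMap.trace K V (φ ^ (k + 1)) = 0) {μ : K} (hμ : μ ≠ 0) :
    φ.maxGenEigenspace μ = ⊥ := by
  have hfin := WellFoundedGT.finite_ne_bot_of_iSupIndep φ.independent_maxGenEigenspace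
  have hsum (k : ℕ) : ∑ ν ∈ hfin.toFinset,
      (finrank K (φ.maxGenEigenspace ν) * ν) * ν ^ k = 0 := by
    rw [← H k, trace_pow_eq_sum_finrank_maxGenEigenspace_mul_pow φ
      (fun ν hν => hfin.mem_toFinset.mpr hν)]
    simp_rw [pow_succ', mul_assoc]
  by_contra hne
  have hrank := Finset.eq_zero_of_forall_sum_mul_pow_eq_zero hsum (hfin.mem_toFinset.mpr hne)
  rw [mul_eq_zero, Nat.cast_eq_zero, Submodule.finrank_eq_zero] at hrank
  exact hrank.elim hne hμ

theorem isNilpotent_of_forall_trace_pow_succ_eq_zero (φ : End K V)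
    (H : ∀ k : ℕ, LinearMap.trace K V (φ ^ (k + 1)) = 0) : IsNilpotent φ := by
  have htop : φ.maxGenEigenspace 0 = ⊤ := by
    rw [eq_top_iff, ← φ.iSup_maxGenEigenspace_eq_top, iSup_le_iff]
    intro μ
    rcases eq_or_ne μ 0 with rfl | hμ
    · exact le_rfl
    · simp [maxGenEigenspace_eq_bot_of_forall_trace_pow_succ_eq_zero φ H hμ]
  refine ((LinearMap.charpoly_nilpotent_tfae φ).out 0 2).mpr fun m => ?_
  obtain ⟨k, hk⟩ := φ.mem_maxGenEigenspace 0 m |>.mp (htop ▸ Submodule.mem_top)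
  exact ⟨k, by simpa using hk⟩

end Module.End

attribute [local instance] LieRing.ofAssociativeRing

theorem LinearMap.trace_mul_lie_eq_zero_of_commute {R M : Type*} [CommRing R] [AddCommGroup M]
    [Module R M] {f x : Module.End R M} (h : Commute f x) (y : Module.End R M) :
    LinearMap.trace R M (f * ⁅x, y⁆) = 0 := by
  rw [Ring.lie_def, mul_sub, map_sub, ← mul_assoc, h.eq, mul_assoc,
    LinearMap.trace_mul_comm R x, mul_assoc, sub_self]

section Lie

variable {K L : Type*} [Field K] [LieRing L] [LieAlgebra K L]

theorem commute_ad_of_mem_lieCentralizer {e x : L} (hx : x ∈ lieCentralizer K L e) :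
    Commute (LieAlgebra.ad K L e) (LieAlgebra.ad K L x) := by
  rw [commute_iff_lie_eq, ← LieHom.map_lie, show ⁅e, x⁆ = 0 from hx, map_zero]

theorem trace_mul_ad_eq_zero_of_mem_bracketSpan {A B : Submodule K L} {f : Module.End K L}
    (hf : ∀ x ∈ A, Commute f (LieAlgebra.ad K L x)) {z : L} (hz : z ∈ bracketSpan K L A B) :
    LinearMap.trace K L (f * LieAlgebra.ad K L z) = 0 := by
  induction hz using Submodule.span_induction with
  | mem z hz =>
    obtain ⟨x, hx, y, -, rfl⟩ := hz
    rw [LieHom.map_lie]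
    exact LinearMap.trace_mul_lie_eq_zero_of_commute (hf x hx) _
  | zero => simp
  | add u v _ _ hu hv => rw [map_add, mul_add, map_add, hu, hv, add_zero]
  | smul c u _ hu => rw [map_smul, mul_smul_comm, map_smul, hu, smul_zero]

end Lie

theorem stmt0_general (K L : Type*) [Field K] [IsAlgClosed K] [CharZero K]
    [LieRing L] [LieAlgebra K L] [FiniteDimensional K L]
    (e : L)
    (hreach : e ∈ bracketSpan K L (lieCentralizer K L e).toSubmodule
        (lieCentralizer K L e).toSubmodule) :
    IsNilpotent (LieAlgebra.ad K L e) := by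
  refine Module.End.isNilpotent_of_forall_trace_pow_succ_eq_zero _ fun k => ?_
  rw [pow_succ]
  exact trace_mul_ad_eq_zero_of_mem_bracketSpan
    (fun x hx => (commute_ad_of_mem_lieCentralizer hx).pow_left k) hreach

/-- If `g` is a finite-dimensional semisimple Lie algebra over an algebraically closed field of
characteristic 0 and `e ∈ ⁅g_e, g_e⁆`, then `e` is nilpotent (`ad e` is nilpotent). -/
theorem stmt0 (K L : Type*) [Field K] [IsAlgClosed K] [CharZero K]
    [LieRing L] [LieAlgebra K L] [FiniteDimensional K L] [LieAlgebra.IsSemisimple K L]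
    (e : L)
    (hreach : e ∈ bracketSpan K L (lieCentralizer K L e).toSubmodule
        (lieCentralizer K L e).toSubmodule) :
    IsNilpotent (LieAlgebra.ad K L e) :=
  stmt0_general K L e hreach
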